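/- arXiv:1111.5968 — 3 statements merged into one kernel-verified Lean document; each statement's English description precedes it below -/
import Mathlib

section
/- Let d ∈ ℕ, β ∈ ℝ_+^d, α ∈ ℝ^d, and assume 𝔐(β^{-1}α) > 0, where β^{-1}α = (α_1/β_1, …, α_d/β_d). Then there exist constants c₁, c₂ > 0 depending only on d, α, β such that for every r ∈ ℕ: c₁ · 2^{𝔐(β^{-1}α) r} · r^{𝔆(β^{-1}α) − 1} ≤ Σ_{κ ∈ ℤ_+^d, (κ,β) ≤ r} 2^{(κ,α)} ≤ c₂ · 2^{𝔐(β^{-1}α) r} · r^{𝔆(β^{-1}α) − 1}. -/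
/-!
Put `δⱼ = M βⱼ - αⱼ ≥ 0`; it vanishes exactly on the set `E` of indices where the ratio
`αⱼ / βⱼ` is maximal, and `2^{(κ,α)} = 2^{M (κ,β)} 2^{-(κ,δ)}`. Fix `j₀ ∈ E`.

Lower bound: let the coordinates in `E \ {j₀}` run over a box of side `≍ r` and take `κ_{j₀}` as
large as the constraint `(κ,β) ≤ r` allows. This gives `≍ r^{𝔆-1}` distinct points, each of
weight at least `2^{M (r - β_{j₀})}`.

Upper bound: fix the other coordinates `y` and sum over `κ_{j₀}` first. This is a geometric
series with ratio `2^{M β_{j₀}} > 1`, so it is dominated by its last term, which is at most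
`2^{(y,α) + M (r - (y,β))}`. What remains is `2^{M r} Σ_y 2^{-(y,δ)}` over a box; it factors over
the coordinates: each coordinate in `E \ {j₀}` contributes `O(r)`, and each coordinate outside
`E` a convergent geometric series.
-/

open Finset Function

lemma Finset.sum_piFinset_eq_sum_sum_update {ι δ R : Type*} [DecidableEq ι] [Fintype ι]
    [DecidableEq δ] [AddCommMonoid R] (s : ι → Finset δ) (i : ι) (a : δ)
    (g : (ι → δ) → R) :
    ∑ x ∈ Fintype.piFinset s, g x =
      ∑ y ∈ Fintype.piFinset (update s i {a}), ∑ k ∈ s i, g (update y i k) := by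
  rw [← sum_product' (f := fun y k => g (update y i k))]
  symm
  refine sum_nbij' (fun p => update p.1 i p.2) (fun x => (update x i a, x i)) ?_ ?_ ?_ ?_ ?_
  · rintro ⟨y, k⟩ h
    simp only [mem_product, Fintype.mem_piFinset] at h ⊢
    intro j
    rcases eq_or_ne j i with rfl | hj
    · simpa using h.2
    · simpa [hj] using h.1 j
  · intro x h
    simp only [mem_product, Fintype.mem_piFinset] at h ⊢
    refine ⟨fun j => ?_, h i⟩
    rcases eq_or_ne j i with rfl | hj
    · simp
    · simpa [hj] using h j
  · rintro ⟨y, k⟩ h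
    simp only [mem_product, Fintype.mem_piFinset] at h
    have hy : y i = a := by simpa using h.1 i
    simp [← hy]
  · intro x _
    simp
  · intros; rfl

lemma geom_sum_le_pow_div_sub_one {q : ℝ} (hq : 1 < q) (n : ℕ) :
    ∑ k ∈ range n, q ^ k ≤ q ^ n / (q - 1) := by
  rw [geom_sum_eq hq.ne']
  gcongr
  linarith

lemma sum_range_ite_pow_le {b M R : ℝ} (hb : 0 < b) (hM : 0 < M) (N : ℕ) :
    ∑ k ∈ range N, (if k * b ≤ R then ((2 : ℝ) ^ (M * b)) ^ k else 0) ≤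
      2 ^ (M * b) / (2 ^ (M * b) - 1) * 2 ^ (M * R) := by
  set q : ℝ := 2 ^ (M * b)
  have hq : 1 < q := Real.one_lt_rpow one_lt_two (mul_pos hM hb)
  rcases lt_or_ge R 0 with hR | hR
  · rw [sum_eq_zero fun k _ => if_neg (by nlinarith [k.cast_nonneg (α := ℝ)])]
    have : 0 < q - 1 := by linarith
    positivity
  set K := ⌊R / b⌋₊
  have hKb : K * b ≤ R := (le_div_iff₀ hb).1 (Nat.floor_le (div_nonneg hR hb.le))
  have hqK : q ^ K ≤ 2 ^ (M * R) := by
    rw [← Real.rpow_natCast, ← Real.rpow_mul zero_le_two]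
    exact Real.rpow_le_rpow_of_exponent_le one_le_two (by nlinarith)
  calc ∑ k ∈ range N, (if k * b ≤ R then q ^ k else 0)
      = ∑ k ∈ (range N).filter (fun k : ℕ => k * b ≤ R), q ^ k := (sum_filter _ _).symm
    _ ≤ ∑ k ∈ range (K + 1), q ^ k := by
        refine sum_le_sum_of_subset_of_nonneg (fun k hk => ?_) fun _ _ _ => by positivity
        rw [mem_filter] at hk
        exact mem_range.2 (Nat.lt_succ_of_le (Nat.le_floor ((le_div_iff₀ hb).2 hk.2)))
    _ ≤ q ^ (K + 1) / (q - 1) := geom_sum_le_pow_div_sub_one hq _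
    _ = q / (q - 1) * q ^ K := by ring
    _ ≤ q / (q - 1) * 2 ^ (M * R) := by
        have : 0 < q - 1 := by linarith
        gcongr

lemma sum_range_floor_pow_le {x b r : ℝ} (hb : 0 < b) (hr : 1 ≤ r) (hx0 : 0 ≤ x) (hx1 : x ≤ 1) :
    ∑ t ∈ range (⌊r / b⌋₊ + 1), x ^ t ≤ (1 / b + 1) * r :=
  calc ∑ t ∈ range (⌊r / b⌋₊ + 1), x ^ t ≤ ∑ _t ∈ range (⌊r / b⌋₊ + 1), (1 : ℝ) :=
        sum_le_sum fun t _ => pow_le_one₀ hx0 hx1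
    _ = ⌊r / b⌋₊ + 1 := by simp
    _ ≤ r / b + 1 := by gcongr; exact Nat.floor_le (by positivity)
    _ ≤ (1 / b + 1) * r := by rw [add_mul, one_div_mul_eq_div]; linarith

variable {ι : Type*} [Fintype ι]

noncomputable section

def pairing (κ : ι → ℕ) (c : ι → ℝ) : ℝ := ∑ j, (κ j : ℝ) * c j

def latticeTerm (α β : ι → ℝ) (r : ℝ) (κ : ι → ℕ) : ℝ :=
  if pairing κ β ≤ r then (2 : ℝ) ^ pairing κ α else 0

def latticeSum (α β : ι → ℝ) (r : ℝ) : ℝ := ∑' κ, latticeTerm α β r κ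

def latticeBox [DecidableEq ι] (β : ι → ℝ) (r : ℝ) : Finset (ι → ℕ) :=
  Fintype.piFinset fun j => range (⌊r / β j⌋₊ + 1)

end

section pairing

variable {c : ι → ℝ}

lemma mul_le_pairing (hc : ∀ j, 0 ≤ c j) (κ : ι → ℕ) (j : ι) : κ j * c j ≤ pairing κ c :=
  single_le_sum (f := fun j => (κ j : ℝ) * c j)
    (fun j _ => mul_nonneg (Nat.cast_nonneg _) (hc j)) (mem_univ j)

lemma pairing_update_of_eq_zero [DecidableEq ι] {y : ι → ℕ} {i : ι} (hy : y i = 0) (k : ℕ)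
    (c : ι → ℝ) : pairing (update y i k) c = pairing y c + k * c i := by
  have h : ∀ j, ((update y i k j : ℕ) : ℝ) * c j =
      update (fun j => (y j : ℝ) * c j) i (k * c i) j := by
    intro j
    rcases eq_or_ne j i with rfl | hj <;> simp [*]
  simp only [pairing, h, sum_update_of_mem (mem_univ i),
    ← sum_erase_add _ _ (mem_univ i), hy, Nat.cast_zero, zero_mul, add_zero,
    sdiff_singleton_eq_erase]
  ring

lemma pairing_sub_mul (κ : ι → ℕ) (α β : ι → ℝ) (M : ℝ) :
    pairing κ α - M * pairing κ β = pairing κ (fun j => α j - M * β j) := by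
  simp only [pairing, mul_sum, ← sum_sub_distrib]
  exact sum_congr rfl fun j _ => by ring

lemma pairing_eq_mul_of_support {κ : ι → ℕ} {α β : ι → ℝ} {M : ℝ}
    (h : ∀ j, κ j ≠ 0 → α j = M * β j) : pairing κ α = M * pairing κ β := by
  rw [pairing, pairing, mul_sum]
  refine sum_congr rfl fun j _ => ?_
  by_cases hj : κ j = 0
  · simp [hj]
  · rw [h j hj]; ring

lemma two_rpow_pairing (κ : ι → ℕ) (c : ι → ℝ) :
    (2 : ℝ) ^ pairing κ c = ∏ j, ((2 : ℝ) ^ c j) ^ κ j := by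
  rw [pairing, Real.rpow_sum_of_pos two_pos]
  refine prod_congr rfl fun j _ => ?_
  rw [← Real.rpow_natCast, ← Real.rpow_mul zero_le_two, mul_comm]

end pairing

section latticeTerm

variable {α β : ι → ℝ} {r : ℝ}

lemma latticeTerm_nonneg (κ : ι → ℕ) : 0 ≤ latticeTerm α β r κ := by
  unfold latticeTerm
  split_ifs <;> positivity

variable [DecidableEq ι] (hβ : ∀ j, 0 < β j)
include hβ

lemma latticeTerm_eq_zero_of_notMem_latticeBox {κ : ι → ℕ} (hκ : κ ∉ latticeBox β r) :
    latticeTerm α β r κ = 0 := by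
  refine if_neg fun hκr => hκ (Fintype.mem_piFinset.2 fun j => ?_)
  rw [mem_range, Nat.lt_succ_iff]
  refine Nat.le_floor ((le_div_iff₀ (hβ j)).2 ?_)
  exact (mul_le_pairing (fun j => (hβ j).le) κ j).trans hκr

lemma summable_latticeTerm : Summable (latticeTerm α β r) :=
  summable_of_ne_finset_zero fun _ => latticeTerm_eq_zero_of_notMem_latticeBox hβ

lemma latticeSum_eq_sum_latticeBox :
    latticeSum α β r = ∑ κ ∈ latticeBox β r, latticeTerm α β r κ :=
  tsum_eq_sum fun _ => latticeTerm_eq_zero_of_notMem_latticeBox hβ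

end latticeTerm

section lower

variable [DecidableEq ι] {α β : ι → ℝ} {M r : ℝ} {E : Finset ι} {j0 : ι}

lemma two_rpow_le_latticeTerm_update (hβ : ∀ j, 0 < β j) (hM : 0 ≤ M) (hj0E : j0 ∈ E)
    (hE : ∀ j ∈ E, α j = M * β j) {y : ι → ℕ} (hy0 : y j0 = 0) (hyE : ∀ j ∉ E, y j = 0)
    (hyr : pairing y β ≤ r) :
    2 ^ (M * (r - β j0)) ≤ latticeTerm α β r (update y j0 ⌊(r - pairing y β) / β j0⌋₊) := by
  set K := ⌊(r - pairing y β) / β j0⌋₊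
  have hKle : K * β j0 ≤ r - pairing y β :=
    (le_div_iff₀ (hβ j0)).1 (Nat.floor_le (div_nonneg (by linarith) (hβ j0).le))
  have hKgt : r - pairing y β < (K + 1) * β j0 :=
    (div_lt_iff₀ (hβ j0)).1 (Nat.lt_floor_add_one _)
  have hsupp : ∀ j, update y j0 K j ≠ 0 → α j = M * β j := by
    intro j hj
    refine hE j (by_contra fun hjE => hj ?_)
    rw [update_of_ne (ne_of_mem_of_not_mem hj0E hjE).symm, hyE j hjE]
  rw [latticeTerm, pairing_eq_mul_of_support hsupp, pairing_update_of_eq_zero hy0,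
    if_pos (by linarith)]
  exact Real.rpow_le_rpow_of_exponent_le one_le_two (by nlinarith)

lemma exists_le_latticeSum (hβ : ∀ j, 0 < β j) (hM : 0 ≤ M) (hj0E : j0 ∈ E)
    (hE : ∀ j ∈ E, α j = M * β j) :
    ∃ c > 0, ∀ r : ℝ, 0 ≤ r → c * 2 ^ (M * r) * r ^ (#E - 1) ≤ latticeSum α β r := by
  set B := ∑ j, β j
  have hB : 0 < B := sum_pos (fun j _ => hβ j) ⟨j0, mem_univ _⟩
  refine ⟨B⁻¹ ^ (#E - 1) * 2 ^ (-(M * β j0)), by positivity, fun r hr => ?_⟩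
  set m := ⌊r / B⌋₊
  set T : Finset (ι → ℕ) :=
    Fintype.piFinset fun j => if j ∈ E.erase j0 then range (m + 1) else {0}
  set Φ : (ι → ℕ) → (ι → ℕ) := fun y => update y j0 ⌊(r - pairing y β) / β j0⌋₊
  have hT : ∀ y ∈ T, y j0 = 0 ∧ (∀ j ∉ E, y j = 0) ∧ pairing y β ≤ r := by
    intro y hy
    rw [Fintype.mem_piFinset] at hy
    have h0 : ∀ j ∉ E.erase j0, y j = 0 := fun j hj => by simpa [hj] using hy j
    have hm : ∀ j, y j ≤ m := fun j => by
      by_cases hj : j ∈ E.erase j0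
      · simpa [hj, Nat.lt_succ_iff] using hy j
      · simp [h0 j hj]
    refine ⟨h0 j0 (notMem_erase _ _), fun j hj => h0 j fun h => hj (mem_of_mem_erase h), ?_⟩
    calc pairing y β ≤ ∑ j, (m : ℝ) * β j :=
          sum_le_sum fun j _ => by gcongr; exacts [(hβ j).le, hm j]
      _ = m * B := (mul_sum _ _ _).symm
      _ ≤ r := (le_div_iff₀ hB).1 (Nat.floor_le (by positivity))
  have hcard : #T = (m + 1) ^ (#E - 1) := by
    simp only [T, Fintype.card_piFinset, apply_ite card, card_range, card_singleton]
    rw [prod_ite_mem, univ_inter, prod_const, card_erase_of_mem hj0E]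
  have hΦ : ∀ y ∈ T, update (Φ y) j0 0 = y := fun y hy => by simp [Φ, (hT y hy).1]
  have hinj : Set.InjOn Φ T := fun y hy y' hy' h => by
    rw [← hΦ y hy, ← hΦ y' hy', h]
  calc B⁻¹ ^ (#E - 1) * 2 ^ (-(M * β j0)) * 2 ^ (M * r) * r ^ (#E - 1)
      = (r / B) ^ (#E - 1) * 2 ^ (M * (r - β j0)) := by
        rw [mul_sub, Real.rpow_sub two_pos, Real.rpow_neg zero_le_two, div_pow]
        ring
    _ ≤ (m + 1) ^ (#E - 1) * 2 ^ (M * (r - β j0)) := by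
        gcongr
        exact (Nat.lt_floor_add_one _).le
    _ = ∑ _y ∈ T, (2 : ℝ) ^ (M * (r - β j0)) := by
        rw [sum_const, hcard, nsmul_eq_mul]
        push_cast
        ring
    _ ≤ ∑ y ∈ T, latticeTerm α β r (Φ y) := sum_le_sum fun y hy =>
        two_rpow_le_latticeTerm_update hβ hM hj0E hE (hT y hy).1 (hT y hy).2.1 (hT y hy).2.2
    _ = ∑ κ ∈ T.image Φ, latticeTerm α β r κ := (sum_image hinj).symm
    _ ≤ latticeSum α β r :=
        (summable_latticeTerm hβ).sum_le_tsum _ fun κ _ => latticeTerm_nonneg κ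

end lower

section upper

variable [DecidableEq ι] {α β : ι → ℝ} {M r : ℝ} {j0 : ι}

lemma sum_latticeTerm_update_le (hβ : ∀ j, 0 < β j) (hM : 0 < M) (hj0 : α j0 = M * β j0)
    {y : ι → ℕ} (hy : y j0 = 0) (N : ℕ) :
    ∑ k ∈ range N, latticeTerm α β r (update y j0 k) ≤
      2 ^ (M * β j0) / (2 ^ (M * β j0) - 1) * 2 ^ (M * r) *
        ∏ j, ((2 : ℝ) ^ (α j - M * β j)) ^ y j := by
  have hterm : ∀ k : ℕ, latticeTerm α β r (update y j0 k) = 2 ^ pairing y α *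
      (if k * β j0 ≤ r - pairing y β then ((2 : ℝ) ^ (M * β j0)) ^ k else 0) := by
    intro k
    simp only [latticeTerm, pairing_update_of_eq_zero hy, hj0]
    by_cases h : k * β j0 ≤ r - pairing y β
    · rw [if_pos (by linarith), if_pos h, Real.rpow_add two_pos, ← Real.rpow_natCast,
        ← Real.rpow_mul zero_le_two, mul_comm (k : ℝ)]
    · rw [if_neg (by linarith), if_neg h, mul_zero]
  rw [sum_congr rfl fun k _ => hterm k, ← mul_sum, ← two_rpow_pairing, ← pairing_sub_mul]
  calc _ ≤ 2 ^ pairing y α *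
        (2 ^ (M * β j0) / (2 ^ (M * β j0) - 1) * 2 ^ (M * (r - pairing y β))) :=
        mul_le_mul_of_nonneg_left (sum_range_ite_pow_le (hβ j0) hM N) (by positivity)
    _ = _ := by
        rw [show M * (r - pairing y β) = M * r + (pairing y α - M * pairing y β) - pairing y α
          by ring, Real.rpow_sub two_pos, Real.rpow_add two_pos]
        field_simp

lemma latticeSum_le_mul_prod (hβ : ∀ j, 0 < β j) (hM : 0 < M) (hj0 : α j0 = M * β j0) :
    latticeSum α β r ≤ 2 ^ (M * β j0) / (2 ^ (M * β j0) - 1) * 2 ^ (M * r) *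
      ∏ j ∈ univ.erase j0, ∑ t ∈ range (⌊r / β j⌋₊ + 1), ((2 : ℝ) ^ (α j - M * β j)) ^ t := by
  set s : ι → Finset ℕ := fun j => range (⌊r / β j⌋₊ + 1)
  set x : ι → ℝ := fun j => 2 ^ (α j - M * β j)
  rw [latticeSum_eq_sum_latticeBox hβ, latticeBox, sum_piFinset_eq_sum_sum_update s j0 0]
  calc _ ≤ ∑ y ∈ Fintype.piFinset (update s j0 {0}),
        2 ^ (M * β j0) / (2 ^ (M * β j0) - 1) * 2 ^ (M * r) * ∏ j, x j ^ y j := by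
        refine sum_le_sum fun y hy => sum_latticeTerm_update_le hβ hM hj0 ?_ _
        simpa using Fintype.mem_piFinset.1 hy j0
    _ = 2 ^ (M * β j0) / (2 ^ (M * β j0) - 1) * 2 ^ (M * r) *
        ∏ j, ∑ t ∈ update s j0 {0} j, x j ^ t := by rw [← mul_sum, prod_univ_sum]
    _ = _ := by
        rw [← mul_prod_erase univ _ (mem_univ j0)]
        simp only [update_self, sum_singleton, pow_zero, one_mul]
        congr 1
        exact prod_congr rfl fun j hj => by rw [update_of_ne (ne_of_mem_erase hj)]

lemma exists_latticeSum_le {E : Finset ι} (hβ : ∀ j, 0 < β j) (hM : 0 < M)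
    (hα : ∀ j, α j ≤ M * β j) (hj0E : j0 ∈ E)
    (hj0 : α j0 = M * β j0) (hE : ∀ j ∉ E, α j ≠ M * β j) :
    ∃ c > 0, ∀ r : ℝ, 1 ≤ r → latticeSum α β r ≤ c * 2 ^ (M * r) * r ^ (#E - 1) := by
  set x : ι → ℝ := fun j => 2 ^ (α j - M * β j)
  have hx0 : ∀ j, 0 < x j := fun j => by positivity
  have hx1 : ∀ j, x j ≤ 1 := fun j =>
    Real.rpow_le_one_of_one_le_of_nonpos one_le_two (by linarith [hα j])
  have hxE : ∀ j ∉ E, x j < 1 := fun j hj =>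
    Real.rpow_lt_one_of_one_lt_of_neg one_lt_two (by linarith [(hα j).lt_of_ne (hE j hj)])
  set c : ι → ℝ := fun j => if j ∈ E then 1 / β j + 1 else (1 - x j)⁻¹
  have hc : ∀ j, 0 < c j := fun j => by
    by_cases hj : j ∈ E
    · simp only [c, if_pos hj]; have := hβ j; positivity
    · simp only [c, if_neg hj]; exact inv_pos.2 (by linarith [hxE j hj])
  have hq : 1 < (2 : ℝ) ^ (M * β j0) := Real.one_lt_rpow one_lt_two (mul_pos hM (hβ j0))
  refine ⟨2 ^ (M * β j0) / (2 ^ (M * β j0) - 1) * ∏ j ∈ univ.erase j0, c j,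
    mul_pos (div_pos (by positivity) (by linarith)) (prod_pos fun j _ => hc j), fun r hr => ?_⟩
  have hfactor : ∀ j, ∑ t ∈ range (⌊r / β j⌋₊ + 1), x j ^ t ≤ (if j ∈ E then r else 1) * c j := by
    intro j
    by_cases hj : j ∈ E
    · simpa only [c, if_pos hj, mul_comm r] using
        sum_range_floor_pow_le (hβ j) hr (hx0 j).le (hx1 j)
    · simpa only [c, if_neg hj, one_mul, ← range_eq_Ico, pow_zero, one_div] using
        geom_sum_Ico_le_of_lt_one (m := 0) (n := ⌊r / β j⌋₊ + 1) (hx0 j).le (hxE j hj)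
  calc latticeSum α β r
      ≤ 2 ^ (M * β j0) / (2 ^ (M * β j0) - 1) * 2 ^ (M * r) *
        ∏ j ∈ univ.erase j0, ∑ t ∈ range (⌊r / β j⌋₊ + 1), x j ^ t :=
        latticeSum_le_mul_prod hβ hM hj0
    _ ≤ 2 ^ (M * β j0) / (2 ^ (M * β j0) - 1) * 2 ^ (M * r) *
        ∏ j ∈ univ.erase j0, (if j ∈ E then r else 1) * c j := by
        gcongr with j
        exact hfactor j
    _ = _ := by
        rw [prod_mul_distrib, prod_ite_mem, erase_inter, univ_inter, prod_const,
          card_erase_of_mem hj0E]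
        ring

end upper

theorem stmt_1_general (d : ℕ) (α β : Fin d → ℝ) (hβ : ∀ j, 0 < β j)
    (M : ℝ) (hM : IsGreatest (Set.range fun j => α j / β j) M) (hMpos : 0 < M)
    (𝔆 : ℕ) (h𝔆 : 𝔆 = (Finset.univ.filter fun j => α j / β j = M).card) :
    ∃ c₁ c₂ : ℝ, 0 < c₁ ∧ 0 < c₂ ∧ ∀ r : ℕ, 0 < r →
      c₁ * (2 : ℝ) ^ (M * r) * (r : ℝ) ^ (𝔆 - 1) ≤
        (∑' κ : Fin d → ℕ,
          if (∑ j, (κ j : ℝ) * β j) ≤ (r : ℝ) then (2 : ℝ) ^ (∑ j, (κ j : ℝ) * α j) else 0) ∧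
      (∑' κ : Fin d → ℕ,
          if (∑ j, (κ j : ℝ) * β j) ≤ (r : ℝ) then (2 : ℝ) ^ (∑ j, (κ j : ℝ) * α j) else 0) ≤
        c₂ * (2 : ℝ) ^ (M * r) * (r : ℝ) ^ (𝔆 - 1) := by
  obtain ⟨⟨j0, hj0⟩, hmax⟩ := hM
  have hdiv : ∀ j, α j / β j = M ↔ α j = M * β j := fun j => div_eq_iff (hβ j).ne'
  have hα : ∀ j, α j ≤ M * β j := fun j => (div_le_iff₀ (hβ j)).1 (hmax ⟨j, rfl⟩)
  set E := univ.filter fun j => α j / β j = M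
  have hj0E : j0 ∈ E := mem_filter.2 ⟨mem_univ _, hj0⟩
  obtain ⟨c₁, hc₁, hlow⟩ := exists_le_latticeSum hβ hMpos.le hj0E fun j hj =>
    (hdiv j).1 (mem_filter.1 hj).2
  obtain ⟨c₂, hc₂, hup⟩ := exists_latticeSum_le hβ hMpos hα hj0E ((hdiv j0).1 hj0)
    fun j hj h => hj (mem_filter.2 ⟨mem_univ _, (hdiv j).2 h⟩)
  subst h𝔆
  exact ⟨c₁, c₂, hc₁, hc₂, fun r hr => ⟨hlow r r.cast_nonneg, hup r (by exact_mod_cast hr)⟩⟩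

/-- Lemma 1.2.2.  Let `β ∈ ℝ_+^d`, `α ∈ ℝ^d` with `𝔐(β⁻¹α) = M > 0`, and let
`𝔆 = card {j : α_j/β_j = M}`.  Then there are `c₁, c₂ > 0` (depending on `d, α, β`) with
`c₁ 2^{M r} r^{𝔆−1} ≤ Σ_{κ ∈ ℤ_+^d, (κ,β) ≤ r} 2^{(κ,α)} ≤ c₂ 2^{M r} r^{𝔆−1}` for all `r ∈ ℕ`,
`r ≥ 1`. -/
theorem stmt_1 (d : ℕ) (hd : 0 < d) (α β : Fin d → ℝ) (hβ : ∀ j, 0 < β j)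
    (M : ℝ) (hM : IsGreatest (Set.range fun j => α j / β j) M) (hMpos : 0 < M)
    (𝔆 : ℕ) (h𝔆 : 𝔆 = (Finset.univ.filter fun j => α j / β j = M).card) :
    ∃ c₁ c₂ : ℝ, 0 < c₁ ∧ 0 < c₂ ∧ ∀ r : ℕ, 0 < r →
      c₁ * (2 : ℝ) ^ (M * r) * (r : ℝ) ^ (𝔆 - 1) ≤
        (∑' κ : Fin d → ℕ,
          if (∑ j, (κ j : ℝ) * β j) ≤ (r : ℝ) then (2 : ℝ) ^ (∑ j, (κ j : ℝ) * α j) else 0) ∧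
      (∑' κ : Fin d → ℕ,
          if (∑ j, (κ j : ℝ) * β j) ≤ (r : ℝ) then (2 : ℝ) ^ (∑ j, (κ j : ℝ) * α j) else 0) ≤
        c₂ * (2 : ℝ) ^ (M * r) * (r : ℝ) ^ (𝔆 - 1) :=
  stmt_1_general d α β hβ M hM hMpos 𝔆 h𝔆
end

section
/- Let d ∈ ℕ and α, β ∈ ℝ_+^d, and set β^{-1}α = (α_1/β_1, …, α_d/β_d). Then there exist constants c₃, c₄ > 0 depending only on d, α, β such that for every r ∈ ℕ: c₃ · 2^{−𝔪(β^{-1}α) r} · r^{𝔠(β^{-1}α) − 1} ≤ Σ_{κ ∈ ℤ_+^d, (κ,β) > r} 2^{−(κ,α)} ≤ c₄ · 2^{−𝔪(β^{-1}α) r} · r^{𝔠(β^{-1}α) − 1}. -/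
/-!
Let `m = min_j α_j / β_j` and call a coordinate minimal when `α_j = m β_j`. Summing the tail
over one minimal coordinate `j₀` leaves a geometric tail of size `≍ 2^{-m (s - t)⁺}`, where `t` is
the `β`-weight of the other coordinates; so the tail sum is comparable to the smoothed sum
`∑_η 2^{-(η,α) - m (s - (η,β))⁺}` over the remaining coordinates. In the smoothed sum every
further minimal coordinate contributes a factor of order `s` and every other one a convergent
geometric factor (upper bound, by induction on the number of coordinates), while all lattice
points of a box of side `≍ s` in the minimal coordinates carry weight exactly `2^{-m s}`
(lower bound).
-/
open scoped ENNReal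
open Finset

namespace LatticeTail

lemma two_rpow_add (x y : ℝ) : (2 : ℝ≥0∞) ^ (x + y) = 2 ^ x * 2 ^ y :=
  ENNReal.rpow_add x y two_ne_zero ENNReal.ofNat_ne_top

lemma two_rpow_le_two_rpow {x y : ℝ} (h : x ≤ y) : (2 : ℝ≥0∞) ^ x ≤ 2 ^ y :=
  ENNReal.rpow_le_rpow_of_exponent_le one_le_two h

lemma two_rpow_ne_top (x : ℝ) : (2 : ℝ≥0∞) ^ x ≠ ⊤ :=
  ENNReal.rpow_ne_top_of_ne_zero two_ne_zero ENNReal.ofNat_ne_top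

lemma tsum_two_rpow_neg_mul_ne_top {γ : ℝ} (hγ : 0 < γ) :
    ∑' k : ℕ, (2 : ℝ≥0∞) ^ (-(k * γ)) ≠ ⊤ := by
  have hq : (2 : ℝ≥0∞) ^ (-γ) < 1 :=
    ENNReal.rpow_lt_one_of_one_lt_of_neg (by norm_num) (neg_lt_zero.2 hγ)
  have hpow (k : ℕ) : (2 : ℝ≥0∞) ^ (-(k * γ)) = (2 ^ (-γ)) ^ k := by
    rw [← ENNReal.rpow_natCast, ← ENNReal.rpow_mul]; ring_nf
  simp_rw [hpow, ENNReal.tsum_geometric]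
  exact ENNReal.inv_ne_top.2 (tsub_pos_iff_lt.2 hq).ne'

section OneDimensional

variable {b m : ℝ}

lemma lt_floor_div_add_one_mul (hb : 0 < b) (u : ℝ) : u < (⌊u / b⌋₊ + 1) * b := by
  have := Nat.lt_floor_add_one (u / b)
  rwa [div_lt_iff₀ hb] at this

lemma floor_div_mul_le (hb : 0 < b) {u : ℝ} (hu : 0 ≤ u) : ⌊u / b⌋₊ * b ≤ u :=
  (le_div_iff₀ hb).1 (Nat.floor_le (div_nonneg hu hb.le))

lemma tsum_two_rpow_shift_le (hb : 0 < b) (hm : 0 ≤ m) (u : ℝ) :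
    ∑' j : ℕ, (2 : ℝ≥0∞) ^ (-(m * ((j + ⌊u / b⌋₊ : ℕ) * b)))
      ≤ 2 ^ (m * b) * (∑' j : ℕ, (2 : ℝ≥0∞) ^ (-(j * (m * b)))) * 2 ^ (-(m * u)) := by
  rw [mul_right_comm, ← ENNReal.tsum_mul_left]
  refine ENNReal.tsum_le_tsum fun j => ?_
  rw [← two_rpow_add, ← two_rpow_add]
  refine two_rpow_le_two_rpow ?_
  have := lt_floor_div_add_one_mul hb u
  push_cast
  nlinarith

lemma tsum_ite_lt_two_rpow_le (hb : 0 < b) (hm : 0 ≤ m) (t : ℝ) :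
    ∑' k : ℕ, (if t < k * b then (2 : ℝ≥0∞) ^ (-(m * (k * b))) else 0)
      ≤ 2 ^ (m * b) * (∑' j : ℕ, (2 : ℝ≥0∞) ^ (-(j * (m * b)))) * 2 ^ (-(m * max t 0)) := by
  set K := ⌊max t 0 / b⌋₊
  have hvanish : ∀ k ∈ range K, (if t < k * b then (2 : ℝ≥0∞) ^ (-(m * (k * b))) else 0) = 0 := by
    intro k hk
    refine if_neg (not_lt.2 ?_)
    have hkb : ((k : ℝ) + 1) * b ≤ max t 0 :=
      (mul_le_mul_of_nonneg_right (by exact_mod_cast mem_range.1 hk) hb.le).trans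
        (floor_div_mul_le hb (le_max_right t 0))
    rcases le_total t 0 with ht | ht
    · rw [max_eq_right ht] at hkb; nlinarith [k.cast_nonneg (α := ℝ)]
    · rw [max_eq_left ht] at hkb; nlinarith
  rw [← Summable.sum_add_tsum_nat_add' (k := K) ENNReal.summable, sum_eq_zero hvanish, zero_add]
  refine le_trans (ENNReal.tsum_le_tsum fun j => ?_) (tsum_two_rpow_shift_le hb hm _)
  split_ifs <;> simp [K]

lemma two_rpow_le_tsum_ite_lt (hb : 0 < b) (hm : 0 ≤ m) (t : ℝ) :
    (2 : ℝ≥0∞) ^ (-(m * (max t 0 + b)))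
      ≤ ∑' k : ℕ, (if t < k * b then (2 : ℝ≥0∞) ^ (-(m * (k * b))) else 0) := by
  set K := ⌊max t 0 / b⌋₊
  have hlt := lt_floor_div_add_one_mul hb (max t 0)
  have hle := floor_div_mul_le hb (le_max_right t 0)
  refine le_trans ?_ (ENNReal.le_tsum (K + 1))
  push_cast
  rw [if_pos (lt_of_le_of_lt (le_max_left t 0) hlt)]
  refine two_rpow_le_two_rpow ?_
  nlinarith

lemma tsum_two_rpow_max_le (hb : 0 < b) (hm : 0 ≤ m) {u : ℝ} (hu : 0 ≤ u) :
    ∑' k : ℕ, (2 : ℝ≥0∞) ^ (-(m * max u (k * b)))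
      ≤ (ENNReal.ofReal b⁻¹ + 2 ^ (m * b) * ∑' j : ℕ, (2 : ℝ≥0∞) ^ (-(j * (m * b))))
        * ENNReal.ofReal (max u 1) * 2 ^ (-(m * u)) := by
  set K := ⌊u / b⌋₊
  set G := ∑' j : ℕ, (2 : ℝ≥0∞) ^ (-(j * (m * b)))
  have hhead : ∑ k ∈ range K, (2 : ℝ≥0∞) ^ (-(m * max u (k * b))) ≤ K * 2 ^ (-(m * u)) := by
    refine le_trans (sum_le_sum fun k _ => two_rpow_le_two_rpow (x := _) (y := -(m * u)) ?_) ?_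
    · nlinarith [le_max_left u (k * b)]
    · simp
  have htail : ∑' j : ℕ, (2 : ℝ≥0∞) ^ (-(m * max u ((j + K : ℕ) * b)))
      ≤ 2 ^ (m * b) * G * 2 ^ (-(m * u)) :=
    le_trans (ENNReal.tsum_le_tsum fun j => two_rpow_le_two_rpow (by
      nlinarith [le_max_right u ((j + K : ℕ) * b)])) (tsum_two_rpow_shift_le hb hm u)
  have hK : (K : ℝ≥0∞) ≤ ENNReal.ofReal b⁻¹ * ENNReal.ofReal (max u 1) := by
    rw [← ENNReal.ofReal_natCast, ← ENNReal.ofReal_mul (inv_nonneg.2 hb.le)]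
    refine ENNReal.ofReal_le_ofReal ((Nat.floor_le (div_nonneg hu hb.le)).trans ?_)
    rw [div_eq_inv_mul]
    exact mul_le_mul_of_nonneg_left (le_max_left u 1) (inv_nonneg.2 hb.le)
  have hone : (1 : ℝ≥0∞) ≤ ENNReal.ofReal (max u 1) := ENNReal.one_le_ofReal.2 (le_max_right u 1)
  rw [← Summable.sum_add_tsum_nat_add' (k := K) ENNReal.summable]
  calc _ ≤ (K : ℝ≥0∞) * 2 ^ (-(m * u)) + 2 ^ (m * b) * G * 2 ^ (-(m * u)) :=
        add_le_add hhead htail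
    _ = (K + 2 ^ (m * b) * G) * 2 ^ (-(m * u)) := by rw [add_mul]
    _ ≤ _ := by
      rw [add_mul (ENNReal.ofReal b⁻¹)]
      gcongr ?_ * _
      exact add_le_add hK (le_mul_of_one_le_right' hone)

lemma tsum_two_rpow_smooth_le {a : ℝ} (hb : 0 < b) (hm : 0 < m) (hab : m * b ≤ a) :
    ∃ C ≠ ⊤, ∀ s : ℝ, ∑' k : ℕ, (2 : ℝ≥0∞) ^ (-(k * a + m * max (s - k * b) 0))
      ≤ C * ENNReal.ofReal (max s 1) ^ (if a = m * b then 1 else 0) * 2 ^ (-(m * max s 0)) := by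
  have hsplit (s : ℝ) (k : ℕ) :
      k * a + m * max (s - k * b) 0 = k * (a - m * b) + m * max (max s 0) (k * b) := by
    have hkb : 0 ≤ (k : ℝ) * b := by positivity
    rw [max_assoc, max_eq_right hkb, ← sub_self ((k : ℝ) * b), max_sub_sub_right]
    ring
  by_cases heq : a = m * b
  · refine ⟨ENNReal.ofReal b⁻¹ + 2 ^ (m * b) * ∑' j : ℕ, (2 : ℝ≥0∞) ^ (-(j * (m * b))),
      ENNReal.add_ne_top.2 ⟨ENNReal.ofReal_ne_top,
        ENNReal.mul_ne_top (two_rpow_ne_top _) (tsum_two_rpow_neg_mul_ne_top (mul_pos hm hb))⟩,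
      fun s => ?_⟩
    have hmax : max (max s 0) 1 = max s 1 := by rw [max_assoc, max_eq_right zero_le_one]
    simp_rw [hsplit, heq, sub_self, mul_zero, zero_add, if_pos, pow_one]
    simpa only [hmax] using tsum_two_rpow_max_le hb hm.le (le_max_right s 0)
  · have hγ : 0 < a - m * b := sub_pos.2 (lt_of_le_of_ne hab (Ne.symm heq))
    refine ⟨_, tsum_two_rpow_neg_mul_ne_top hγ, fun s => ?_⟩
    rw [if_neg heq, pow_zero, mul_one, ← ENNReal.tsum_mul_right]
    refine ENNReal.tsum_le_tsum fun k => ?_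
    rw [hsplit, neg_add, two_rpow_add]
    exact mul_le_mul_right (two_rpow_le_two_rpow (by nlinarith [le_max_left (max s 0) (k * b)])) _

end OneDimensional

section Tails

variable {ι : Type*} [Fintype ι]

noncomputable def tailSum (α β : ι → ℝ) (s : ℝ) : ℝ≥0∞ :=
  ∑' κ : ι → ℕ, if s < ∑ j, (κ j : ℝ) * β j then (2 : ℝ≥0∞) ^ (-∑ j, (κ j : ℝ) * α j) else 0

noncomputable def smoothTailSum (m : ℝ) (α β : ι → ℝ) (s : ℝ) : ℝ≥0∞ :=
  ∑' κ : ι → ℕ, (2 : ℝ≥0∞) ^ (-(∑ j, (κ j : ℝ) * α j + m * max (s - ∑ j, (κ j : ℝ) * β j) 0))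

lemma toReal_tailSum (α β : ι → ℝ) (s : ℝ) :
    (tailSum α β s).toReal = ∑' κ : ι → ℕ,
      if s < ∑ j, (κ j : ℝ) * β j then (2 : ℝ) ^ (-∑ j, (κ j : ℝ) * α j) else 0 := by
  rw [tailSum, ENNReal.tsum_toReal_eq fun κ => by split_ifs <;> simp]
  refine tsum_congr fun κ => ?_
  split_ifs <;> simp [← ENNReal.toReal_rpow]

end Tails

section SplitCoordinate

variable {n : ℕ} {m : ℝ}

lemma tsum_eq_tsum_insertNth (p : Fin (n + 1)) (F : (Fin (n + 1) → ℕ) → ℝ≥0∞) :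
    ∑' κ, F κ = ∑' (k : ℕ) (η : Fin n → ℕ), F (p.insertNth k η) := by
  rw [← (Fin.insertNthEquiv (fun _ => ℕ) p).tsum_eq, ENNReal.tsum_prod']
  rfl

lemma sum_insertNth_mul (p : Fin (n + 1)) (k : ℕ) (η : Fin n → ℕ) (a : Fin (n + 1) → ℝ) :
    ∑ j, ((p.insertNth k η : Fin (n + 1) → ℕ) j : ℝ) * a j
      = k * a p + ∑ i, (η i : ℝ) * a (p.succAbove i) := by
  simp [Fin.sum_univ_succAbove _ p]

lemma card_filter_succAbove (p : Fin (n + 1)) (Q : Fin (n + 1) → Prop) [DecidablePred Q] :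
    #{j | Q j} = (if Q p then 1 else 0) + #{i | Q (p.succAbove i)} := by
  simp only [card_filter]
  exact Fin.sum_univ_succAbove _ p

lemma smoothTailSum_insertNth (p : Fin (n + 1)) (α β : Fin (n + 1) → ℝ) (s : ℝ) :
    smoothTailSum m α β s = ∑' k : ℕ, 2 ^ (-(k * α p)) *
      smoothTailSum m (fun i => α (p.succAbove i)) (fun i => β (p.succAbove i)) (s - k * β p) := by
  rw [smoothTailSum, tsum_eq_tsum_insertNth p]
  refine tsum_congr fun k => ?_
  rw [smoothTailSum, ← ENNReal.tsum_mul_left]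
  refine tsum_congr fun η => ?_
  rw [sum_insertNth_mul, sum_insertNth_mul, ← two_rpow_add]
  congr 1
  ring_nf

lemma tailSum_insertNth (p : Fin (n + 1)) {α β : Fin (n + 1) → ℝ} (hp : α p = m * β p)
    (s : ℝ) : tailSum α β s = ∑' η : Fin n → ℕ,
      2 ^ (-∑ i, (η i : ℝ) * α (p.succAbove i)) * ∑' k : ℕ,
        if s - ∑ i, (η i : ℝ) * β (p.succAbove i) < k * β p then
          (2 : ℝ≥0∞) ^ (-(m * (k * β p))) else 0 := by
  rw [tailSum, tsum_eq_tsum_insertNth p, ENNReal.tsum_comm]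
  refine tsum_congr fun η => ?_
  rw [← ENNReal.tsum_mul_left]
  refine tsum_congr fun k => ?_
  rw [sum_insertNth_mul, sum_insertNth_mul, mul_ite, mul_zero, ← two_rpow_add, hp]
  refine if_congr ⟨fun h => by linarith, fun h => by linarith⟩ (by ring_nf) rfl


variable {α β : Fin (n + 1) → ℝ} (p : Fin (n + 1))

lemma tailSum_le_smoothTailSum (hb : 0 < β p) (hm : 0 ≤ m) (hp : α p = m * β p) (s : ℝ) :
    tailSum α β s ≤ 2 ^ (m * β p) * (∑' j : ℕ, (2 : ℝ≥0∞) ^ (-(j * (m * β p)))) *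
      smoothTailSum m (fun i => α (p.succAbove i)) (fun i => β (p.succAbove i)) s := by
  rw [tailSum_insertNth p hp, smoothTailSum, ← ENNReal.tsum_mul_left]
  refine ENNReal.tsum_le_tsum fun η => ?_
  refine (mul_le_mul_right (tsum_ite_lt_two_rpow_le hb hm _) _).trans_eq ?_
  rw [neg_add, two_rpow_add]
  ring

lemma smoothTailSum_le_tailSum (hb : 0 < β p) (hm : 0 ≤ m) (hp : α p = m * β p) (s : ℝ) :
    2 ^ (-(m * β p)) *
      smoothTailSum m (fun i => α (p.succAbove i)) (fun i => β (p.succAbove i)) s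
      ≤ tailSum α β s := by
  rw [tailSum_insertNth p hp, smoothTailSum, ← ENNReal.tsum_mul_left]
  refine ENNReal.tsum_le_tsum fun η => ?_
  refine le_of_eq_of_le ?_ (mul_le_mul_right (two_rpow_le_tsum_ite_lt hb hm _) _)
  rw [← two_rpow_add, ← two_rpow_add]
  ring_nf

end SplitCoordinate

lemma smoothTailSum_le {m : ℝ} (hm : 0 < m) {n : ℕ} (α β : Fin n → ℝ) (hβ : ∀ j, 0 < β j)
    (hαβ : ∀ j, m * β j ≤ α j) : ∃ C ≠ ⊤, ∀ s : ℝ, smoothTailSum m α β s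
      ≤ C * ENNReal.ofReal (max s 1) ^ #{j | α j = m * β j} * 2 ^ (-(m * max s 0)) := by
  induction n with
  | zero => exact ⟨1, ENNReal.one_ne_top, fun s => by simp [smoothTailSum]⟩
  | succ n ih =>
    obtain ⟨C, hC, hrest⟩ := ih (fun i => α (Fin.succAbove 0 i)) (fun i => β (Fin.succAbove 0 i))
      (fun i => hβ _) (fun i => hαβ _)
    obtain ⟨C₀, hC₀, hfirst⟩ := tsum_two_rpow_smooth_le (hβ 0) hm (hαβ 0)
    refine ⟨C₀ * C, ENNReal.mul_ne_top hC₀ hC, fun s => ?_⟩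
    rw [smoothTailSum_insertNth 0, card_filter_succAbove 0, pow_add]
    set M := ENNReal.ofReal (max s 1) ^ #{i | α (Fin.succAbove 0 i) = m * β (Fin.succAbove 0 i)}
    have hterm (k : ℕ) : 2 ^ (-(k * α 0)) * smoothTailSum m (fun i => α (Fin.succAbove 0 i))
          (fun i => β (Fin.succAbove 0 i)) (s - k * β 0)
        ≤ C * M * 2 ^ (-(k * α 0 + m * max (s - k * β 0) 0)) := by
      calc _ ≤ 2 ^ (-(k * α 0)) * (C * ENNReal.ofReal (max (s - k * β 0) 1)
              ^ #{i | α (Fin.succAbove 0 i) = m * β (Fin.succAbove 0 i)}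
              * 2 ^ (-(m * max (s - k * β 0) 0))) := mul_le_mul_right (hrest _) _
        _ ≤ 2 ^ (-(k * α 0)) * (C * M * 2 ^ (-(m * max (s - k * β 0) 0))) := by
          simp only [M]
          gcongr
          exact sub_le_self s (mul_nonneg k.cast_nonneg (hβ 0).le)
        _ = _ := by
          rw [neg_add, two_rpow_add]
          ring
    calc _ ≤ ∑' k : ℕ, C * M * 2 ^ (-(k * α 0 + m * max (s - k * β 0) 0)) :=
          ENNReal.tsum_le_tsum hterm
      _ = C * M * ∑' k : ℕ, 2 ^ (-(k * α 0 + m * max (s - k * β 0) 0)) := ENNReal.tsum_mul_left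
      _ ≤ C * M * (C₀ * ENNReal.ofReal (max s 1) ^ (if α 0 = m * β 0 then 1 else 0)
            * 2 ^ (-(m * max s 0))) := mul_le_mul_right (hfirst s) _
      _ = _ := by ring

lemma sum_mul_add_mul_max_eq_mul {ι : Type*} [Fintype ι] {m s : ℝ} {α β : ι → ℝ} {η : ι → ℕ}
    (hη : ∀ j, α j ≠ m * β j → η j = 0) (hs : ∑ j, (η j : ℝ) * β j ≤ s) :
    ∑ j, (η j : ℝ) * α j + m * max (s - ∑ j, (η j : ℝ) * β j) 0 = m * s := by
  have hα : ∑ j, (η j : ℝ) * α j = m * ∑ j, (η j : ℝ) * β j := by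
    rw [mul_sum]
    refine sum_congr rfl fun j _ => ?_
    by_cases hj : α j = m * β j
    · rw [hj]; ring
    · simp [hη j hj]
  rw [hα, max_eq_left (sub_nonneg.2 hs)]
  ring

lemma le_smoothTailSum {ι : Type*} [Fintype ι] (m : ℝ) (α : ι → ℝ) {β : ι → ℝ}
    (hβ : ∀ j, 0 ≤ β j) {s : ℝ} (hs : 0 ≤ s) :
    ENNReal.ofReal (s / (∑ j, β j + 1)) ^ #{j | α j = m * β j} * 2 ^ (-(m * s))
      ≤ smoothTailSum m α β s := by
  classical
  set B := ∑ j, β j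
  have hB : 0 ≤ B := sum_nonneg fun j _ => hβ j
  set N := ⌊s / (B + 1)⌋₊
  have hNB : N * B ≤ s := by
    have hN : (N : ℝ) ≤ s / (B + 1) := Nat.floor_le (by positivity)
    rw [le_div_iff₀ (by positivity)] at hN
    nlinarith
  set A := Fintype.piFinset fun j => if α j = m * β j then range (N + 1) else {0}
  have hcard : (#A : ℝ≥0∞) = (N + 1) ^ #{j | α j = m * β j} := by
    simp [A, Fintype.card_piFinset, apply_ite card, prod_ite]
  have hterm : ∀ η ∈ A, (2 : ℝ≥0∞) ^ (-(m * s))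
      = 2 ^ (-(∑ j, (η j : ℝ) * α j + m * max (s - ∑ j, (η j : ℝ) * β j) 0)) := by
    intro η hη
    have hη (j : ι) := Fintype.mem_piFinset.1 hη j
    have hle (j : ι) : η j ≤ N := by
      have hj := hη j
      split_ifs at hj
      · exact Nat.lt_succ_iff.1 (mem_range.1 hj)
      · simp [mem_singleton.1 hj]
    have hβs : ∑ j, (η j : ℝ) * β j ≤ s :=
      calc ∑ j, (η j : ℝ) * β j ≤ ∑ j, (N : ℝ) * β j :=
            sum_le_sum fun j _ => mul_le_mul_of_nonneg_right (by exact_mod_cast hle j) (hβ j)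
        _ = N * B := by rw [mul_sum]
        _ ≤ s := hNB
    rw [sum_mul_add_mul_max_eq_mul (fun j hj => by simpa [hj] using hη j) hβs]
  calc _ ≤ (#A : ℝ≥0∞) * 2 ^ (-(m * s)) := by
        rw [hcard]
        gcongr
        calc ENNReal.ofReal (s / (B + 1)) ≤ ENNReal.ofReal (N + 1) :=
              ENNReal.ofReal_le_ofReal (Nat.lt_floor_add_one _).le
          _ = N + 1 := by rw [ENNReal.ofReal_add (by positivity) zero_le_one]; simp
    _ = ∑ η ∈ A, (2 : ℝ≥0∞) ^ (-(m * s)) := by rw [sum_const, nsmul_eq_mul]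
    _ ≤ _ := (sum_congr rfl hterm).trans_le (ENNReal.sum_le_tsum A)

lemma tailSum_bounds {n : ℕ} {m : ℝ} {α β : Fin (n + 1) → ℝ} (p : Fin (n + 1))
    (hβ : ∀ j, 0 < β j) (hm : 0 < m) (hαβ : ∀ j, m * β j ≤ α j) (hp : α p = m * β p) :
    ∃ c C : ℝ≥0∞, c ≠ 0 ∧ c ≠ ⊤ ∧ C ≠ ⊤ ∧ ∀ s : ℝ, 1 ≤ s →
      c * 2 ^ (-(m * s)) * ENNReal.ofReal s ^ #{i | α (p.succAbove i) = m * β (p.succAbove i)}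
        ≤ tailSum α β s ∧
      tailSum α β s
        ≤ C * 2 ^ (-(m * s)) * ENNReal.ofReal s ^ #{i | α (p.succAbove i) = m * β (p.succAbove i)} := by
  set e := #{i | α (p.succAbove i) = m * β (p.succAbove i)}
  set B := ∑ i, β (p.succAbove i)
  have hB : 0 ≤ B := sum_nonneg fun i _ => (hβ _).le
  obtain ⟨C, hC, hup⟩ := smoothTailSum_le hm (fun i => α (p.succAbove i))
    (fun i => β (p.succAbove i)) (fun i => hβ _) (fun i => hαβ _)
  refine ⟨2 ^ (-(m * β p)) * ENNReal.ofReal (B + 1)⁻¹ ^ e,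
    2 ^ (m * β p) * (∑' j : ℕ, (2 : ℝ≥0∞) ^ (-(j * (m * β p)))) * C, ?_, ?_, ?_,
    fun s hs => ⟨?_, ?_⟩⟩
  · exact mul_ne_zero (ENNReal.rpow_pos two_pos ENNReal.ofNat_ne_top).ne'
      (pow_ne_zero _ (ENNReal.ofReal_pos.2 (by positivity)).ne')
  · exact ENNReal.mul_ne_top (two_rpow_ne_top _) (ENNReal.pow_ne_top ENNReal.ofReal_ne_top)
  · exact ENNReal.mul_ne_top (ENNReal.mul_ne_top (two_rpow_ne_top _)
      (tsum_two_rpow_neg_mul_ne_top (mul_pos hm (hβ p)))) hC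
  · refine le_of_eq_of_le ?_ ((mul_le_mul_right (le_smoothTailSum m _
      (fun i => (hβ _).le) (zero_le_one.trans hs)) _).trans
        (smoothTailSum_le_tailSum p (hβ p) hm.le hp s))
    rw [div_eq_inv_mul, ENNReal.ofReal_mul (by positivity), mul_pow]
    ring
  · refine (tailSum_le_smoothTailSum p (hβ p) hm.le hp s).trans
      ((mul_le_mul_right (hup s) _).trans_eq ?_)
    rw [max_eq_left hs, max_eq_left (zero_le_one.trans hs)]
    ring

end LatticeTail

open LatticeTail in
theorem stmt_2_general (d : ℕ) (α β : Fin d → ℝ)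
    (hα : ∀ j, 0 < α j) (hβ : ∀ j, 0 < β j)
    (m : ℝ) (hm : IsLeast (Set.range fun j => α j / β j) m)
    (𝔠 : ℕ) (h𝔠 : 𝔠 = (Finset.univ.filter fun j => α j / β j = m).card) :
    ∃ c₃ c₄ : ℝ, 0 < c₃ ∧ 0 < c₄ ∧ ∀ r : ℕ, 0 < r →
      c₃ * (2 : ℝ) ^ (-(m * r)) * (r : ℝ) ^ (𝔠 - 1) ≤
        (∑' κ : Fin d → ℕ,
          if (r : ℝ) < (∑ j, (κ j : ℝ) * β j) then (2 : ℝ) ^ (-(∑ j, (κ j : ℝ) * α j)) else 0) ∧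
      (∑' κ : Fin d → ℕ,
          if (r : ℝ) < (∑ j, (κ j : ℝ) * β j) then (2 : ℝ) ^ (-(∑ j, (κ j : ℝ) * α j)) else 0) ≤
        c₄ * (2 : ℝ) ^ (-(m * r)) * (r : ℝ) ^ (𝔠 - 1) := by
  obtain ⟨j₀, hj₀⟩ := hm.1
  obtain ⟨n, rfl⟩ : ∃ n, d = n + 1 := ⟨d - 1, by have := j₀.pos; omega⟩
  have hdiv (j : Fin (n + 1)) : α j / β j = m ↔ α j = m * β j := div_eq_iff (hβ j).ne'
  have hαβ (j : Fin (n + 1)) : m * β j ≤ α j := (le_div_iff₀ (hβ j)).1 (hm.2 ⟨j, rfl⟩)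
  have hmpos : 0 < m := hj₀ ▸ div_pos (hα j₀) (hβ j₀)
  have hcard : #{i | α (j₀.succAbove i) = m * β (j₀.succAbove i)} = 𝔠 - 1 := by
    rw [h𝔠, card_filter_succAbove j₀, if_pos hj₀]
    simp [hdiv]
  obtain ⟨c, C, hc0, hctop, hCtop, hbounds⟩ := tailSum_bounds j₀ hβ hmpos hαβ ((hdiv j₀).1 hj₀)
  refine ⟨c.toReal, C.toReal + 1, ENNReal.toReal_pos hc0 hctop, by positivity, fun r hr => ?_⟩
  obtain ⟨hlow, hup⟩ := hbounds r (by exact_mod_cast hr)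
  rw [hcard] at hlow hup
  have htoReal (c : ℝ≥0∞) : (c * 2 ^ (-(m * r)) * ENNReal.ofReal r ^ (𝔠 - 1)).toReal
      = c.toReal * (2 : ℝ) ^ (-(m * r)) * (r : ℝ) ^ (𝔠 - 1) := by
    simp [← ENNReal.toReal_rpow]
  have hCfin : C * 2 ^ (-(m * r)) * ENNReal.ofReal r ^ (𝔠 - 1) ≠ ⊤ :=
    ENNReal.mul_ne_top (ENNReal.mul_ne_top hCtop (two_rpow_ne_top _))
      (ENNReal.pow_ne_top ENNReal.ofReal_ne_top)
  rw [← toReal_tailSum]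
  refine ⟨htoReal c ▸ ENNReal.toReal_mono (ne_top_of_le_ne_top hCfin hup) hlow, ?_⟩
  calc _ ≤ C.toReal * (2 : ℝ) ^ (-(m * r)) * (r : ℝ) ^ (𝔠 - 1) :=
        htoReal C ▸ ENNReal.toReal_mono hCfin hup
    _ ≤ _ := by gcongr; linarith

/-- Lemma 1.2.3.  Let `α, β ∈ ℝ_+^d`, `m = 𝔪(β⁻¹α) = min_j α_j/β_j` and
`𝔠 = card {j : α_j/β_j = m}`.  Then there are `c₃, c₄ > 0` (depending on `d, α, β`) with
`c₃ 2^{−m r} r^{𝔠−1} ≤ Σ_{κ ∈ ℤ_+^d, (κ,β) > r} 2^{−(κ,α)} ≤ c₄ 2^{−m r} r^{𝔠−1}`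
for all `r ∈ ℕ`, `r ≥ 1`. -/
theorem stmt_2 (d : ℕ) (hd : 0 < d) (α β : Fin d → ℝ)
    (hα : ∀ j, 0 < α j) (hβ : ∀ j, 0 < β j)
    (m : ℝ) (hm : IsLeast (Set.range fun j => α j / β j) m)
    (𝔠 : ℕ) (h𝔠 : 𝔠 = (Finset.univ.filter fun j => α j / β j = m).card) :
    ∃ c₃ c₄ : ℝ, 0 < c₃ ∧ 0 < c₄ ∧ ∀ r : ℕ, 0 < r →
      c₃ * (2 : ℝ) ^ (-(m * r)) * (r : ℝ) ^ (𝔠 - 1) ≤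
        (∑' κ : Fin d → ℕ,
          if (r : ℝ) < (∑ j, (κ j : ℝ) * β j) then (2 : ℝ) ^ (-(∑ j, (κ j : ℝ) * α j)) else 0) ∧
      (∑' κ : Fin d → ℕ,
          if (r : ℝ) < (∑ j, (κ j : ℝ) * β j) then (2 : ℝ) ^ (-(∑ j, (κ j : ℝ) * α j)) else 0) ≤
        c₄ * (2 : ℝ) ^ (-(m * r)) * (r : ℝ) ^ (𝔠 - 1) :=
  stmt_2_general d α β hα hβ m hm 𝔠 h𝔠
end

section
/- Let d ∈ ℕ, β ∈ ℝ_+^d, ε > 0, τ ≥ 0, let J ⊆ {1,…,d} be a nonempty subset with complement J′ = {1,…,d} \ J, and set 𝔠 = card J. Then there exists a constant c > 0 depending only on d, β, ε, τ, J such that for every s ∈ ℕ: Σ_{κ ∈ ℤ_+^d, s−1 < (κ,β) ≤ s} 2^{−ε (κ^{J′}, β^{J′})} (1 + (κ^{J′}, β^{J′}))^τ ≤ c · s^{𝔠 − 1}, where (κ^{J′}, β^{J′}) = Σ_{j ∈ J′} κ_j β_j. -/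
/-!
For `τ ≥ 0` the weight `2^(-ε x) (1 + x)^τ` is submultiplicative on `x ≥ 0`, so the summand is
bounded by a product of one-dimensional weights, equal to `1` on the coordinates in `J` and summable
on those in `J′`. Fix `i ∈ J`. Once the other coordinates are fixed, the slab
`s - 1 < (κ, β) ≤ s` leaves at most `1 / β i + 1` values of `κ i`, and every coordinate satisfies
`κ j ≤ s / β j`. Hence the sum is at most `1 / β i + 1` times a product over `j ≠ i` of
one-dimensional sums, each `O(s)` for `j ∈ J` and `O(1)` for `j ∈ J′`; this gives `s^(𝔠 - 1)`.
-/

open Finset Real Function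

theorem Finset.one_add_sum_le_prod_one_add {ι R : Type*} [CommRing R] [LinearOrder R]
    [IsStrictOrderedRing R] (s : Finset ι) {a : ι → R} (ha : ∀ i ∈ s, 0 ≤ a i) :
    1 + ∑ i ∈ s, a i ≤ ∏ i ∈ s, (1 + a i) := by
  induction s using Finset.cons_induction with
  | empty => simp
  | cons i s hi ih =>
    rw [sum_cons, prod_cons]
    have hai := ha i (mem_cons_self i s)
    have hs := sum_nonneg fun j hj => ha j (mem_cons_of_mem hj)
    nlinarith [ih fun j hj => ha j (mem_cons_of_mem hj)]

noncomputable def decayWeight (ε τ x : ℝ) : ℝ := 2 ^ (-(ε * x)) * (1 + x) ^ τ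

lemma decayWeight_pos (ε τ : ℝ) {x : ℝ} (hx : 0 ≤ x) : 0 < decayWeight ε τ x := by
  unfold decayWeight; positivity

lemma decayWeight_sum_le_prod {ι : Type*} (ε : ℝ) {τ : ℝ} (hτ : 0 ≤ τ) (s : Finset ι)
    {x : ι → ℝ} (hx : ∀ i ∈ s, 0 ≤ x i) :
    decayWeight ε τ (∑ i ∈ s, x i) ≤ ∏ i ∈ s, decayWeight ε τ (x i) := by
  have hexp : (2 : ℝ) ^ (-(ε * ∑ i ∈ s, x i)) = ∏ i ∈ s, (2 : ℝ) ^ (-(ε * x i)) := by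
    rw [mul_sum, ← sum_neg_distrib]
    exact rpow_sum_of_pos two_pos _ _
  have hpoly : (1 + ∑ i ∈ s, x i) ^ τ ≤ ∏ i ∈ s, (1 + x i) ^ τ := by
    rw [Real.finsetProd_rpow s (fun i => 1 + x i) fun i hi => by linarith [hx i hi]]
    exact rpow_le_rpow (by linarith [sum_nonneg hx]) (one_add_sum_le_prod_one_add s hx) hτ
  unfold decayWeight
  rw [prod_mul_distrib, hexp]
  exact mul_le_mul_of_nonneg_left hpoly (by positivity)

lemma summable_decayWeight_nat_mul {ε τ b : ℝ} (hε : 0 < ε) (hτ : 0 ≤ τ) (hb : 0 < b) :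
    Summable fun n : ℕ => decayWeight ε τ (n * b) := by
  set r : ℝ := 2 ^ (-(ε * b))
  have hr : ‖r‖ < 1 := by
    rw [norm_of_nonneg (by positivity)]
    exact rpow_lt_one_of_one_lt_of_neg one_lt_two (by nlinarith)
  set m := ⌈τ⌉₊
  have hgeom : Summable fun n : ℕ => ((n : ℝ) + 1) ^ m * r ^ n := by
    have h0 : Summable fun n : ℕ => (n : ℝ) ^ m * r ^ n :=
      summable_pow_mul_geometric_of_norm_lt_one m hr
    have h := (summable_nat_add_iff 1).mpr h0
    refine (h.mul_left r⁻¹).congr fun n => ?_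
    have : r ≠ 0 := by positivity
    simp only [pow_succ, Nat.cast_add, Nat.cast_one]
    field_simp
  refine (hgeom.mul_left ((1 + b) ^ m)).of_nonneg_of_le
    (fun n => (decayWeight_pos ε τ (by positivity)).le) fun n => ?_
  have hexp : (2 : ℝ) ^ (-(ε * (n * b))) = r ^ n := by
    rw [← rpow_natCast, ← rpow_mul two_pos.le]
    ring_nf
  have hpoly : (1 + n * b) ^ τ ≤ (1 + b) ^ m * ((n : ℝ) + 1) ^ m :=
    calc (1 + n * b) ^ τ ≤ ((1 + b) * (n + 1)) ^ τ :=
          rpow_le_rpow (by positivity) (by nlinarith [(n.cast_nonneg : (0 : ℝ) ≤ n)]) hτ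
      _ ≤ ((1 + b) * (n + 1)) ^ (m : ℝ) :=
          rpow_le_rpow_of_exponent_le (one_le_mul_of_one_le_of_one_le (by linarith)
            (by linarith [(n.cast_nonneg : (0 : ℝ) ≤ n)])) (Nat.le_ceil τ)
      _ = (1 + b) ^ m * ((n : ℝ) + 1) ^ m := by rw [rpow_natCast, mul_pow]
  rw [decayWeight, hexp, mul_comm, ← mul_assoc]
  exact mul_le_mul_of_nonneg_right hpoly (by positivity)

lemma card_le_of_mul_mem_Ioc {a b : ℝ} (hb : 0 < b) {S : Finset ℕ}
    (hS : ∀ n ∈ S, (n : ℝ) * b ∈ Set.Ioc a (a + 1)) : (#S : ℝ) ≤ 1 / b + 1 := by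
  rcases S.eq_empty_or_nonempty with rfl | hne
  · simp only [card_empty, Nat.cast_zero]; positivity
  set m := S.min' hne
  have hsub : S ⊆ Icc m (m + ⌊1 / b⌋₊) := fun n hn => by
    have hmn : m ≤ n := S.min'_le n hn
    have hgap : ((n - m : ℕ) : ℝ) ≤ 1 / b := by
      rw [Nat.cast_sub hmn, le_div_iff₀ hb]
      nlinarith [(hS n hn).2, (hS m (S.min'_mem hne)).1]
    have := Nat.le_floor hgap
    exact mem_Icc.2 ⟨hmn, by omega⟩
  calc (#S : ℝ) ≤ ⌊1 / b⌋₊ + 1 := by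
        have := card_le_card hsub
        rw [Nat.card_Icc] at this
        exact_mod_cast this.trans (by omega)
    _ ≤ 1 / b + 1 := by gcongr; exact Nat.floor_le (by positivity)

section Slab

variable {ι : Type*} [Fintype ι] [DecidableEq ι] {β : ι → ℝ}

lemma mem_piFinset_range_floor_of_sum_le (hβ : ∀ j, 0 < β j) {s : ℝ} {κ : ι → ℕ}
    (hκ : ∑ j, κ j * β j ≤ s) : κ ∈ Fintype.piFinset fun j => range (⌊s / β j⌋₊ + 1) := by
  refine Fintype.mem_piFinset.2 fun j => mem_range_succ_iff.2 (Nat.le_floor ?_)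
  rw [le_div_iff₀ (hβ j)]
  exact (single_le_sum (fun i _ => by have := hβ i; positivity) (mem_univ j)).trans hκ

lemma sum_update_zero_mul_add (κ : ι → ℕ) (β : ι → ℝ) (i : ι) :
    ∑ j, (update κ i 0 j : ℝ) * β j + κ i * β i = ∑ j, κ j * β j := by
  rw [← add_sum_erase _ _ (mem_univ i), ← add_sum_erase _ (fun j => (κ j : ℝ) * β j) (mem_univ i),
    sum_congr rfl fun j hj => by rw [update_of_ne (ne_of_mem_erase hj)]]
  simp only [update_self, Nat.cast_zero, zero_mul]
  ring

lemma sum_slab_update_zero_le (hβ : ∀ j, 0 < β j) (i : ι) (t : ι → Finset ℕ)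
    {F : (ι → ℕ) → ℝ} (hF : ∀ κ, 0 ≤ F κ) (s : ℝ) :
    ∑ κ ∈ Fintype.piFinset t with s - 1 < ∑ j, κ j * β j ∧ ∑ j, κ j * β j ≤ s, F (update κ i 0)
      ≤ (1 / β i + 1) * ∑ r ∈ Fintype.piFinset (update t i {0}), F r := by
  set S := {κ ∈ Fintype.piFinset t | s - 1 < ∑ j, κ j * β j ∧ ∑ j, κ j * β j ≤ s}
  -- On a fiber the other coordinates are fixed, so `κ i * β i` lies in an interval of length 1.
  have hfiber : ∀ r, (#{κ ∈ S | update κ i 0 = r} : ℝ) ≤ 1 / β i + 1 := fun r => by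
    have hinj : Set.InjOn (· i) (S.filter (update · i 0 = r) : Set (ι → ℕ)) :=
      fun κ hκ κ' hκ' heq => by
        rw [← update_eq_self i κ, ← update_eq_self i κ', ← update_idem 0 (κ i) κ,
          ← update_idem 0 (κ' i) κ', (mem_filter.1 hκ).2, (mem_filter.1 hκ').2]
        exact congrArg _ heq
    rw [← card_image_of_injOn hinj]
    refine card_le_of_mul_mem_Ioc (a := s - 1 - ∑ j, r j * β j) (hβ i) ?_
    simp only [S, mem_image, mem_filter]
    rintro _ ⟨κ, ⟨⟨-, hlo, hhi⟩, rfl⟩, rfl⟩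
    have := sum_update_zero_mul_add κ β i
    constructor <;> linarith
  have himage : S.image (update · i 0) ⊆ Fintype.piFinset (update t i {0}) := by
    simp only [image_subset_iff, Fintype.mem_piFinset]
    intro κ hκ j
    rcases eq_or_ne j i with rfl | hj
    · simp
    · simpa [update_of_ne hj] using Fintype.mem_piFinset.1 (mem_filter.1 hκ).1 j
  calc ∑ κ ∈ S, F (update κ i 0)
      = ∑ r ∈ S.image (update · i 0), #{κ ∈ S | update κ i 0 = r} • F r := sum_comp _ _
    _ ≤ ∑ r ∈ S.image (update · i 0), (1 / β i + 1) * F r :=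
        sum_le_sum fun r _ => by rw [nsmul_eq_mul]; gcongr; exacts [hF r, hfiber r]
    _ ≤ ∑ r ∈ Fintype.piFinset (update t i {0}), (1 / β i + 1) * F r :=
        sum_le_sum_of_subset_of_nonneg himage fun r _ _ => by
          have := hβ i; have := hF r; positivity
    _ = _ := (mul_sum _ _ _).symm

end Slab

section Weight

variable {ι : Type*} [DecidableEq ι] {ε τ : ℝ} {β : ι → ℝ} {J : Finset ι}

variable (ε τ β J) in
noncomputable def coordWeight (j : ι) (n : ℕ) : ℝ :=
  if j ∈ J then 1 else decayWeight ε τ (n * β j)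

variable (ε τ β J) in
noncomputable def coordConst (j : ι) : ℝ :=
  if j ∈ J then 1 / β j + 1 else ∑' n : ℕ, decayWeight ε τ (n * β j)

lemma coordWeight_nonneg (hβ : ∀ j, 0 < β j) (j : ι) (n : ℕ) : 0 ≤ coordWeight ε τ β J j n := by
  unfold coordWeight
  split_ifs
  · exact zero_le_one
  · exact (decayWeight_pos ε τ (by have := hβ j; positivity)).le

lemma coordConst_pos (hε : 0 < ε) (hτ : 0 ≤ τ) (hβ : ∀ j, 0 < β j) (j : ι) :
    0 < coordConst ε τ β J j := by
  have := hβ j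
  unfold coordConst
  split_ifs
  · positivity
  · exact (summable_decayWeight_nat_mul hε hτ this).tsum_pos
      (fun n => (decayWeight_pos ε τ (by positivity)).le) 0 (decayWeight_pos ε τ (by simp))

lemma decayWeight_le_prod_coordWeight [Fintype ι] (hτ : 0 ≤ τ) (hβ : ∀ j, 0 < β j) (κ : ι → ℕ) :
    decayWeight ε τ (∑ j ∈ Jᶜ, κ j * β j) ≤ ∏ j, coordWeight ε τ β J j (κ j) := by
  calc decayWeight ε τ (∑ j ∈ Jᶜ, κ j * β j) ≤ ∏ j ∈ Jᶜ, decayWeight ε τ (κ j * β j) :=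
        decayWeight_sum_le_prod ε hτ _ fun j _ => by have := hβ j; positivity
    _ = ∏ j, coordWeight ε τ β J j (κ j) := by
        rw [← prod_compl_mul_prod J,
          prod_eq_one (f := fun j => coordWeight ε τ β J j (κ j)) fun j hj => if_pos hj, mul_one]
        exact prod_congr rfl fun j hj => (if_neg (mem_compl.1 hj)).symm

lemma sum_coordWeight_le (hε : 0 < ε) (hτ : 0 ≤ τ) (hβ : ∀ j, 0 < β j) {i : ι} (hi : i ∈ J)
    {s : ℝ} (hs : 1 ≤ s) (j : ι) :
    ∑ n ∈ update (fun j => range (⌊s / β j⌋₊ + 1)) i {0} j, coordWeight ε τ β J j n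
      ≤ coordConst ε τ β J j * if j ∈ J.erase i then s else 1 := by
  have := hβ j
  rcases eq_or_ne j i with rfl | hji
  · simp [coordWeight, coordConst, hi, this.le]
  simp only [update_of_ne hji, mem_erase, hji, ne_eq, not_false_eq_true, true_and, coordWeight,
    coordConst]
  split_ifs with hj
  · have := Nat.floor_le (a := s / β j) (by positivity)
    simp only [sum_const, card_range, nsmul_eq_mul, mul_one, Nat.cast_add, Nat.cast_one]
    rw [add_mul, one_div_mul_eq_div]
    linarith
  · rw [mul_one]
    exact (summable_decayWeight_nat_mul hε hτ this).sum_le_tsum _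
      fun n _ => (decayWeight_pos ε τ (by positivity)).le

lemma sum_slab_decayWeight_le [Fintype ι] (hε : 0 < ε) (hτ : 0 ≤ τ) (hβ : ∀ j, 0 < β j)
    {i : ι} (hi : i ∈ J) {s : ℝ} (hs : 1 ≤ s) :
    ∑ κ ∈ Fintype.piFinset (fun j => range (⌊s / β j⌋₊ + 1))
        with s - 1 < ∑ j, κ j * β j ∧ ∑ j, κ j * β j ≤ s, decayWeight ε τ (∑ j ∈ Jᶜ, κ j * β j)
      ≤ (1 / β i + 1) * (∏ j, coordConst ε τ β J j) * s ^ #(J.erase i) := by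
  set box : ι → Finset ℕ := fun j => range (⌊s / β j⌋₊ + 1)
  have hupdate (κ : ι → ℕ) :
      ∏ j, coordWeight ε τ β J j (update κ i 0 j) = ∏ j, coordWeight ε τ β J j (κ j) :=
    prod_congr rfl fun j _ => by
      rcases eq_or_ne j i with rfl | hji
      · simp [coordWeight, hi]
      · rw [update_of_ne hji]
  calc _ ≤ ∑ κ ∈ Fintype.piFinset box with s - 1 < ∑ j, κ j * β j ∧ ∑ j, κ j * β j ≤ s,
          ∏ j, coordWeight ε τ β J j (update κ i 0 j) :=
        sum_le_sum fun κ _ => (hupdate κ).symm ▸ decayWeight_le_prod_coordWeight hτ hβ κ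
    _ ≤ (1 / β i + 1) * ∑ r ∈ Fintype.piFinset (update box i {0}),
          ∏ j, coordWeight ε τ β J j (r j) :=
        sum_slab_update_zero_le hβ i box (F := fun r => ∏ j, coordWeight ε τ β J j (r j))
          (fun r => prod_nonneg fun j _ => coordWeight_nonneg hβ j _) s
    _ = (1 / β i + 1) * ∏ j, ∑ n ∈ update box i {0} j, coordWeight ε τ β J j n := by
        rw [prod_univ_sum]
    _ ≤ (1 / β i + 1) * ∏ j, (coordConst ε τ β J j * if j ∈ J.erase i then s else 1) :=
        mul_le_mul_of_nonneg_left (prod_le_prod (fun j _ => sum_nonneg fun n _ =>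
          coordWeight_nonneg hβ j n) fun j _ => sum_coordWeight_le hε hτ hβ hi hs j)
          (by have := hβ i; positivity)
    _ = _ := by rw [prod_mul_distrib, prod_ite_mem, univ_inter, prod_const, mul_assoc]

end Weight

/-- Lemma 1.2.4.  Let `β ∈ ℝ_+^d`, `ε > 0`, `τ ≥ 0`, let `J ⊆ {1,…,d}` be nonempty with
complement `J′` and `𝔠 = card J`.  Then there is `c > 0` (depending on `d, β, ε, τ, J`)
such that for every `s ∈ ℕ`, `s ≥ 1`:
`Σ_{κ ∈ ℤ_+^d, s−1 < (κ,β) ≤ s} 2^{−ε (κ^{J′},β^{J′})} (1 + (κ^{J′},β^{J′}))^τ ≤ c s^{𝔠−1}`. -/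
theorem stmt_3 (d : ℕ) (β : Fin d → ℝ) (hβ : ∀ j, 0 < β j)
    (ε : ℝ) (hε : 0 < ε) (τ : ℝ) (hτ : 0 ≤ τ)
    (J : Finset (Fin d)) (hJ : J.Nonempty) (𝔠 : ℕ) (h𝔠 : 𝔠 = J.card) :
    ∃ c : ℝ, 0 < c ∧ ∀ s : ℕ, 0 < s →
      (∑' κ : Fin d → ℕ,
        if (s : ℝ) - 1 < (∑ j, (κ j : ℝ) * β j) ∧ (∑ j, (κ j : ℝ) * β j) ≤ (s : ℝ) then
          (2 : ℝ) ^ (-(ε * ∑ j ∈ Jᶜ, (κ j : ℝ) * β j)) *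
            (1 + ∑ j ∈ Jᶜ, (κ j : ℝ) * β j) ^ τ
        else 0) ≤ c * (s : ℝ) ^ (𝔠 - 1) := by
  obtain ⟨i, hi⟩ := hJ
  refine ⟨(1 / β i + 1) * ∏ j, coordConst ε τ β J j,
    mul_pos (by have := hβ i; positivity) (prod_pos fun j _ => coordConst_pos hε hτ hβ j),
    fun s hs => ?_⟩
  rw [tsum_eq_sum (s := Fintype.piFinset fun j => range (⌊(s : ℝ) / β j⌋₊ + 1))
      fun κ hκ => if_neg fun h => hκ (mem_piFinset_range_floor_of_sum_le hβ h.2),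
    ← sum_filter, h𝔠, ← card_erase_of_mem hi]
  exact sum_slab_decayWeight_le hε hτ hβ hi (by exact_mod_cast hs)
end
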